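/- arXiv:1805.09748 — 5 statements merged into one kernel-verified Lean document; each statement's English description precedes it below -/
import Mathlib

section
/- Every Hilbert–Schmidt multilinear operator T : H₁ × ⋯ × Hₙ → H between Hilbert spaces factors through a Hilbert space, and Γ(T) ≤ ‖T‖_{HS}; that is, the identity map from the space of Hilbert–Schmidt multilinear operators (with the Hilbert–Schmidt norm) into Γ(H₁,…,Hₙ;H) (with the norm Γ) has norm at most 1. -/
open scoped NNReal

noncomputable section

universe u

variable (𝕜 : Type u) [RCLike 𝕜]

/-- A factorization of the bounded multilinear operator `T` through a Hilbert space: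
a Hilbert space `H`, a bounded multilinear operator `A` into `H`, and a Lipschitz map `B`
defined on the image of `A`, such that `T = B ∘ A`. -/
structure HilbertFactorization {n : ℕ} {X : Fin n → Type u} {Y : Type u}
    [∀ i, NormedAddCommGroup (X i)] [∀ i, NormedSpace 𝕜 (X i)]
    [NormedAddCommGroup Y] [NormedSpace 𝕜 Y]
    (T : ContinuousMultilinearMap 𝕜 X Y) where
  H : Type u
  [instNormed : NormedAddCommGroup H]
  [instInner : InnerProductSpace 𝕜 H]
  [instComplete : CompleteSpace H]
  A : ContinuousMultilinearMap 𝕜 X H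
  B : H → Y
  K : ℝ≥0
  lipschitz : LipschitzOnWith K B (Set.range fun x => A x)
  factors : ∀ x, T x = B (A x)

attribute [instance] HilbertFactorization.instNormed HilbertFactorization.instInner
  HilbertFactorization.instComplete

variable {𝕜}

/-- `T` factors through a Hilbert space. -/
def FactorsThroughHilbert {n : ℕ} {X : Fin n → Type u} {Y : Type u}
    [∀ i, NormedAddCommGroup (X i)] [∀ i, NormedSpace 𝕜 (X i)]
    [NormedAddCommGroup Y] [NormedSpace 𝕜 Y]
    (T : ContinuousMultilinearMap 𝕜 X Y) : Prop :=
  Nonempty (HilbertFactorization 𝕜 T)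

/-- The constant `Γ(T)`: the infimum of `‖A‖ · Lip(B)` over all factorizations of `T`
through a Hilbert space. -/
def gammaNorm {n : ℕ} {X : Fin n → Type u} {Y : Type u}
    [∀ i, NormedAddCommGroup (X i)] [∀ i, NormedSpace 𝕜 (X i)]
    [NormedAddCommGroup Y] [NormedSpace 𝕜 Y]
    (T : ContinuousMultilinearMap 𝕜 X Y) : ℝ :=
  sInf {c : ℝ | ∃ F : HilbertFactorization 𝕜 T, c = ‖F.A‖ * (F.K : ℝ)}

section AuxHS

open scoped ENNReal

private lemma summable_mul_of_sq' {α : Type u} {f g : α → ℝ}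
    (hf0 : ∀ a, 0 ≤ f a) (hg0 : ∀ a, 0 ≤ g a)
    (hf : Summable fun a => f a ^ 2) (hg : Summable fun a => g a ^ 2) :
    Summable fun a => f a * g a := by
  refine Summable.of_nonneg_of_le (fun a => mul_nonneg (hf0 a) (hg0 a)) (fun a => ?_)
    ((hf.add hg).mul_left (1/2 : ℝ))
  nlinarith [sq_nonneg (f a - g a)]

private lemma tsum_mul_le_sqrt' {α : Type u} {f g : α → ℝ}
    (hf0 : ∀ a, 0 ≤ f a) (hg0 : ∀ a, 0 ≤ g a)
    (hf : Summable fun a => f a ^ 2) (hg : Summable fun a => g a ^ 2) :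
    ∑' a, f a * g a ≤ Real.sqrt (∑' a, f a ^ 2) * Real.sqrt (∑' a, g a ^ 2) := by
  have h5 : 0 ≤ ∑' a, f a ^ 2 := tsum_nonneg fun a => sq_nonneg _
  have h6 : 0 ≤ ∑' a, g a ^ 2 := tsum_nonneg fun a => sq_nonneg _
  refine Summable.tsum_le_of_sum_le (summable_mul_of_sq' hf0 hg0 hf hg) fun s => ?_
  have h1 : (∑ a ∈ s, f a * g a) ^ 2 ≤ (∑ a ∈ s, f a ^ 2) * ∑ a ∈ s, g a ^ 2 :=
    Finset.sum_mul_sq_le_sq_mul_sq s f g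
  have h2 : (∑ a ∈ s, f a ^ 2) ≤ ∑' a, f a ^ 2 := Summable.sum_le_tsum s (fun a _ => sq_nonneg _) hf
  have h3 : (∑ a ∈ s, g a ^ 2) ≤ ∑' a, g a ^ 2 := Summable.sum_le_tsum s (fun a _ => sq_nonneg _) hg
  have h4 : 0 ≤ ∑ a ∈ s, f a * g a :=
    Finset.sum_nonneg fun a _ => mul_nonneg (hf0 a) (hg0 a)
  calc ∑ a ∈ s, f a * g a
      ≤ Real.sqrt ((∑' a, f a ^ 2) * (∑' a, g a ^ 2)) := by
        rw [Real.le_sqrt h4 (mul_nonneg h5 h6)]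
        exact h1.trans (mul_le_mul h2 h3 (Finset.sum_nonneg fun a _ => sq_nonneg _) h5)
    _ = _ := Real.sqrt_mul h5 _

private lemma parseval_sq' {G : Type u} [NormedAddCommGroup G] [InnerProductSpace 𝕜 G]
    [CompleteSpace G] {ιG : Type u} (b : HilbertBasis ιG 𝕜 G) (x : G) :
    (Summable fun j => ‖b.repr x j‖ ^ 2) ∧ ∑' j, ‖b.repr x j‖ ^ 2 = ‖x‖ ^ 2 := by
  have h2 : (0:ℝ) < (2 : ℝ≥0∞).toReal := by simp
  have hm := lp.memℓp (b.repr x)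
  have hs := hm.summable h2
  have hn := lp.norm_rpow_eq_tsum h2 (b.repr x)
  have hconv : ∀ r : ℝ, r ^ (2 : ℝ≥0∞).toReal = r ^ 2 := fun r => by
    rw [show (2:ℝ≥0∞).toReal = ((2:ℕ):ℝ) by simp, Real.rpow_natCast]
  simp only [hconv] at hs hn
  refine ⟨hs, ?_⟩
  rw [← hn, b.repr.norm_map]

private lemma key_bound' {E : Type u} [NormedAddCommGroup E] [NormedSpace 𝕜 E] [CompleteSpace E] :
    ∀ (n : ℕ) {H ι : Fin n → Type u}
    [∀ i, NormedAddCommGroup (H i)] [∀ i, InnerProductSpace 𝕜 (H i)] [∀ i, CompleteSpace (H i)]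
    (b : ∀ i, HilbertBasis (ι i) 𝕜 (H i)) (T : ContinuousMultilinearMap 𝕜 H E),
    (Summable fun j : ∀ i, ι i => ‖T fun i => b i (j i)‖ ^ 2) → ∀ x : ∀ i, H i,
    ‖T x‖ ≤ Real.sqrt (∑' j : ∀ i, ι i, ‖T fun i => b i (j i)‖ ^ 2) * ∏ i, ‖x i‖ := by
  intro n
  induction n with
  | zero =>
    intro H ι _ _ _ b T hHS x
    have hx : (fun i : Fin 0 => b i ((default : ∀ i : Fin 0, ι i) i)) = x := by
      funext i; exact i.elim0
    have ht : ∑' j : ∀ i : Fin 0, ι i, ‖T fun i => b i (j i)‖ ^ 2 = ‖T x‖ ^ 2 := by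
      rw [tsum_eq_single (default : ∀ i : Fin 0, ι i)
        (fun j hj => absurd (Subsingleton.elim j default) hj), hx]
    rw [ht, Real.sqrt_sq (norm_nonneg _)]
    simp
  | succ n IH =>
    intro H ι _ _ _ b T hHS x
    classical
    set f := T.curryLeft with hf
    set b' : ∀ i : Fin n, HilbertBasis (ι i.succ) 𝕜 (H i.succ) := fun i => b i.succ with hb'
    have hcons : ∀ (j₀ : ι 0) (j' : ∀ i : Fin n, ι i.succ),
        (fun i => b i (Fin.cons j₀ j' i)) = Fin.cons (b 0 j₀) (fun i => b' i (j' i)) := by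
      intro j₀ j'; funext i
      refine Fin.cases ?_ (fun k => ?_) i <;> simp [hb']
    have hFG : ∀ (j₀ : ι 0) (j' : ∀ i : Fin n, ι i.succ),
        ‖f (b 0 j₀) fun i => b' i (j' i)‖ ^ 2 = ‖T fun i => b i (Fin.cons j₀ j' i)‖ ^ 2 := by
      intro j₀ j'
      rw [hf, ContinuousMultilinearMap.curryLeft_apply, ← hcons j₀ j']
    have hHSe : Summable fun p : ι 0 × ∀ i : Fin n, ι i.succ =>
        ‖T fun i => b i (Fin.consEquiv ι p i)‖ ^ 2 :=
      (Equiv.summable_iff (Fin.consEquiv ι)).mpr hHS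
    have hslice : ∀ j₀ : ι 0, Summable fun j' : ∀ i : Fin n, ι i.succ =>
        ‖f (b 0 j₀) fun i => b' i (j' i)‖ ^ 2 := by
      intro j₀
      have h1 := hHSe.prod_factor j₀
      simp only [hFG]
      exact h1
    set c : ι 0 → ℝ := fun j₀ => ‖(b 0).repr (x 0) j₀‖ with hc
    set M : ι 0 → ℝ := fun j₀ => Real.sqrt (∑' j' : ∀ i : Fin n, ι i.succ,
      ‖f (b 0 j₀) fun i => b' i (j' i)‖ ^ 2) with hM
    have hMnonneg : ∀ j₀, 0 ≤ M j₀ := fun j₀ => Real.sqrt_nonneg _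
    have hcnonneg : ∀ j₀, 0 ≤ c j₀ := fun j₀ => norm_nonneg _
    set P : ℝ := ∏ i : Fin n, ‖x i.succ‖ with hP
    have hPnonneg : 0 ≤ P := Finset.prod_nonneg fun i _ => norm_nonneg _
    have hIH : ∀ j₀, ‖f (b 0 j₀) (Fin.tail x)‖ ≤ M j₀ * P :=
      fun j₀ => IH b' (f (b 0 j₀)) (hslice j₀) (Fin.tail x)
    have hM2 : Summable fun j₀ => M j₀ ^ 2 := by
      refine hHSe.prod.congr fun j₀ => ?_
      rw [hM]
      rw [Real.sq_sqrt (tsum_nonneg fun _ => sq_nonneg _)]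
      exact tsum_congr fun j' => (hFG j₀ j').symm
    obtain ⟨hc2, hc2sum⟩ := parseval_sq' (b 0) (x 0)
    -- expansion
    have hx0 : HasSum (fun j₀ => ((b 0).repr (x 0) j₀ : 𝕜) • b 0 j₀) (x 0) :=
      (b 0).hasSum_repr (x 0)
    have h2 : HasSum (fun j₀ => ((b 0).repr (x 0) j₀ : 𝕜) • f (b 0 j₀)) (f (x 0)) := by
      have h := hx0.mapL f
      simpa only [map_smul] using h
    have h3 : HasSum (fun j₀ => ((b 0).repr (x 0) j₀ : 𝕜) • f (b 0 j₀) (Fin.tail x)) (T x) := by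
      have h4 := ContinuousMultilinearMap.hasSum_eval h2 (Fin.tail x)
      have h5 : f (x 0) (Fin.tail x) = T x := by
        rw [hf, ContinuousMultilinearMap.curryLeft_apply, Fin.cons_self_tail]
      simpa only [ContinuousMultilinearMap.smul_apply, h5] using h4
    have hterm_le : ∀ j₀, ‖((b 0).repr (x 0) j₀ : 𝕜) • f (b 0 j₀) (Fin.tail x)‖
        ≤ c j₀ * (M j₀ * P) := by
      intro j₀
      rw [norm_smul]
      exact mul_le_mul_of_nonneg_left (hIH j₀) (hcnonneg j₀)
    have hcM : Summable fun j₀ => c j₀ * M j₀ :=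
      summable_mul_of_sq' hcnonneg hMnonneg hc2 hM2
    have hbound : Summable fun j₀ => c j₀ * (M j₀ * P) := by
      simpa only [mul_assoc] using hcM.mul_right P
    have hsn : Summable fun j₀ => ‖((b 0).repr (x 0) j₀ : 𝕜) • f (b 0 j₀) (Fin.tail x)‖ :=
      Summable.of_nonneg_of_le (fun _ => norm_nonneg _) hterm_le hbound
    have hMtot : ∑' j₀, M j₀ ^ 2 = ∑' j : ∀ i, ι i, ‖T fun i => b i (j i)‖ ^ 2 := by
      have e1 : ∑' j₀, M j₀ ^ 2
          = ∑' j₀, ∑' j', ‖T fun i => b i (Fin.consEquiv ι (j₀, j') i)‖ ^ 2 := by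
        refine tsum_congr fun j₀ => ?_
        rw [hM, Real.sq_sqrt (tsum_nonneg fun _ => sq_nonneg _)]
        exact tsum_congr fun j' => hFG j₀ j'
      rw [e1, ← Summable.tsum_prod hHSe]
      exact Equiv.tsum_eq (Fin.consEquiv ι) fun j => ‖T fun i => b i (j i)‖ ^ 2
    calc ‖T x‖ = ‖∑' j₀, ((b 0).repr (x 0) j₀ : 𝕜) • f (b 0 j₀) (Fin.tail x)‖ := by
          rw [h3.tsum_eq]
      _ ≤ ∑' j₀, ‖((b 0).repr (x 0) j₀ : 𝕜) • f (b 0 j₀) (Fin.tail x)‖ :=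
          norm_tsum_le_tsum_norm hsn
      _ ≤ ∑' j₀, c j₀ * (M j₀ * P) := Summable.tsum_le_tsum hterm_le hsn hbound
      _ = (∑' j₀, c j₀ * M j₀) * P := by
          simp only [← mul_assoc]
          exact hcM.tsum_mul_right P
      _ ≤ (Real.sqrt (∑' j₀, c j₀ ^ 2) * Real.sqrt (∑' j₀, M j₀ ^ 2)) * P :=
          mul_le_mul_of_nonneg_right (tsum_mul_le_sqrt' hcnonneg hMnonneg hc2 hM2) hPnonneg
      _ = Real.sqrt (∑' j : ∀ i, ι i, ‖T fun i => b i (j i)‖ ^ 2) * ∏ i, ‖x i‖ := by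
          rw [hc2sum, Real.sqrt_sq (norm_nonneg _), hMtot, Fin.prod_univ_succ]
          ring

end AuxHS

/-- Every Hilbert–Schmidt multilinear operator `T : H₁ × ⋯ × Hₙ → E` between
Hilbert spaces factors through a Hilbert space, and `Γ(T) ≤ ‖T‖_{HS}`, where
`‖T‖_{HS} = (∑_{j₁,…,jₙ} ‖T(e¹_{j₁},…,eⁿ_{jₙ})‖²)^{1/2}` for orthonormal (Hilbert) bases
`(eⁱ_j)_j` of the `Hᵢ`.  In particular the identity map from the Hilbert–Schmidt operators
into `Γ(H₁,…,Hₙ;E)` has norm at most `1`. -/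
theorem hilbertSchmidt_factorsThroughHilbert {n : ℕ} (hn : 0 < n) {H : Fin n → Type u} {E : Type u}
    {ι : Fin n → Type u}
    [∀ i, NormedAddCommGroup (H i)] [∀ i, InnerProductSpace 𝕜 (H i)]
    [∀ i, CompleteSpace (H i)]
    [NormedAddCommGroup E] [InnerProductSpace 𝕜 E] [CompleteSpace E]
    (b : ∀ i, HilbertBasis (ι i) 𝕜 (H i))
    (T : ContinuousMultilinearMap 𝕜 H E)
    (hHS : Summable fun j : ∀ i, ι i => ‖T fun i => b i (j i)‖ ^ 2) :
    FactorsThroughHilbert T ∧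
      gammaNorm T ≤ Real.sqrt (∑' j : ∀ i, ι i, ‖T fun i => b i (j i)‖ ^ 2) := by
  have hTnorm : ‖T‖ ≤ Real.sqrt (∑' j : ∀ i, ι i, ‖T fun i => b i (j i)‖ ^ 2) :=
    T.opNorm_le_bound (Real.sqrt_nonneg _) (key_bound' n b T hHS)
  let F : HilbertFactorization 𝕜 T :=
    { H := E
      instNormed := inferInstance
      instInner := inferInstance
      instComplete := inferInstance
      A := T
      B := id
      K := 1
      lipschitz := (LipschitzWith.id (α := E)).lipschitzOnWith
      factors := fun _ => rfl }
  refine ⟨⟨F⟩, ?_⟩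
  have hmem : ‖T‖ ∈ {c : ℝ | ∃ F' : HilbertFactorization 𝕜 T, c = ‖F'.A‖ * (F'.K : ℝ)} :=
    ⟨F, by show ‖T‖ = ‖T‖ * ((1 : ℝ≥0) : ℝ); simp⟩
  have hbdd : BddBelow {c : ℝ | ∃ F' : HilbertFactorization 𝕜 T, c = ‖F'.A‖ * (F'.K : ℝ)} :=
    ⟨0, fun c hc => by obtain ⟨F', rfl⟩ := hc; positivity⟩
  exact le_trans (csInf_le hbdd hmem) hTnorm
end
end

section
/- For all Banach spaces X₁,…,Xₙ, Y, the function T ↦ Γ(T) is a norm on the vector space Γ(X₁,…,Xₙ;Y) of bounded multilinear operators from X₁ × ⋯ × Xₙ to Y that factor through a Hilbert space (in particular, this set is a linear subspace of the bounded multilinear operators). -/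
open scoped NNReal

noncomputable section

universe u

variable (𝕜 : Type u) [RCLike 𝕜]

variable {𝕜}

/-!
Scaling `A ↦ t • A`, `B ↦ B ∘ (t⁻¹ • ·)` leaves `‖A‖ · Lip(B)` unchanged, so a factorization of
an operator `T ≠ 0` can be balanced to `‖A‖ = Lip(B)`. Two balanced factorizations of `T` and `S`
combine into one of `T + S` through the `ℓ²`-sum `H₁ ⊕₂ H₂`, with `A = (A₁, A₂)` and
`B (h₁, h₂) = B₁ h₁ + B₂ h₂`; by Cauchy–Schwarz its cost is at most
`√(‖A₁‖² + ‖A₂‖²) · √(Lip(B₁)² + Lip(B₂)²) = ‖A₁‖ Lip(B₁) + ‖A₂‖ Lip(B₂)`, which gives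
subadditivity. Definiteness follows from `‖T‖ ≤ Γ(T)`: for `n > 0` both `A` and `T` vanish at `0`,
so `‖T x‖ ≤ Lip(B) ‖A x‖`.
-/

theorem LipschitzOnWith.fst_add_snd_withLp {E F Z : Type*} [SeminormedAddCommGroup E]
    [SeminormedAddCommGroup F] [SeminormedAddCommGroup Z] {f : E → Z} {g : F → Z} {s : Set E}
    {t : Set F} {Kf Kg : ℝ≥0} (hf : LipschitzOnWith Kf f s) (hg : LipschitzOnWith Kg g t) :
    LipschitzOnWith (NNReal.sqrt (Kf ^ 2 + Kg ^ 2))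
      (fun p : WithLp 2 (E × F) => f p.fst + g p.snd) {p | p.fst ∈ s ∧ p.snd ∈ t} := by
  refine LipschitzOnWith.of_dist_le_mul fun p hp q hq => ?_
  have cauchySchwarz := Real.sum_mul_le_sqrt_mul_sqrt Finset.univ ![(Kf : ℝ), Kg]
    ![dist p.fst q.fst, dist p.snd q.snd]
  simp only [Fin.sum_univ_two, Matrix.cons_val_zero, Matrix.cons_val_one] at cauchySchwarz
  calc dist (f p.fst + g p.snd) (f q.fst + g q.snd)
      ≤ dist (f p.fst) (f q.fst) + dist (g p.snd) (g q.snd) := dist_add_add_le _ _ _ _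
    _ ≤ Kf * dist p.fst q.fst + Kg * dist p.snd q.snd :=
        add_le_add (hf.dist_le_mul _ hp.1 _ hq.1) (hg.dist_le_mul _ hp.2 _ hq.2)
    _ ≤ _ := cauchySchwarz
    _ = NNReal.sqrt (Kf ^ 2 + Kg ^ 2) * dist p q := by
        rw [WithLp.prod_dist_eq_of_L2, Real.coe_sqrt]; push_cast; rfl

namespace HilbertFactorization

variable {n : ℕ} {X : Fin n → Type u} {Y : Type u}
  [∀ i, NormedAddCommGroup (X i)] [∀ i, NormedSpace 𝕜 (X i)]
  [NormedAddCommGroup Y] [NormedSpace 𝕜 Y]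
  {T S : ContinuousMultilinearMap 𝕜 X Y}

def cost (F : HilbertFactorization 𝕜 T) : ℝ := ‖F.A‖ * F.K

theorem cost_nonneg (F : HilbertFactorization 𝕜 T) : 0 ≤ F.cost := by
  unfold cost; positivity

theorem norm_apply_le_cost_mul (hn : 0 < n) (F : HilbertFactorization 𝕜 T) (x : ∀ i, X i) :
    ‖T x‖ ≤ F.cost * ∏ i, ‖x i‖ := by
  have hA : F.A 0 = 0 := F.A.map_coord_zero ⟨0, hn⟩ rfl
  have hT : T 0 = 0 := T.map_coord_zero ⟨0, hn⟩ rfl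
  calc ‖T x‖ = dist (F.B (F.A x)) (F.B (F.A 0)) := by
        rw [← F.factors, ← F.factors, hT, dist_zero_right]
    _ ≤ F.K * dist (F.A x) (F.A 0) := F.lipschitz.dist_le_mul _ ⟨x, rfl⟩ _ ⟨0, rfl⟩
    _ = F.K * ‖F.A x‖ := by rw [hA, dist_zero_right]
    _ ≤ F.K * (‖F.A‖ * ∏ i, ‖x i‖) := by gcongr; exact F.A.le_opNorm x
    _ = F.cost * ∏ i, ‖x i‖ := by unfold cost; ring

theorem opNorm_le_cost (hn : 0 < n) (F : HilbertFactorization 𝕜 T) : ‖T‖ ≤ F.cost :=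
  T.opNorm_le_bound F.cost_nonneg (F.norm_apply_le_cost_mul hn)

theorem cost_pos (hn : 0 < n) (hT : T ≠ 0) (F : HilbertFactorization 𝕜 T) : 0 < F.cost :=
  (norm_pos_iff.2 hT).trans_le (F.opNorm_le_cost hn)

def zero : HilbertFactorization 𝕜 (0 : ContinuousMultilinearMap 𝕜 X Y) where
  H := 𝕜
  A := 0
  B _ := 0
  K := 0
  lipschitz := (LipschitzWith.const 0).lipschitzOnWith
  factors _ := rfl

theorem cost_zero :
    (zero : HilbertFactorization 𝕜 (0 : ContinuousMultilinearMap 𝕜 X Y)).cost = 0 := by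
  simp [cost, zero]

def smul (c : 𝕜) (F : HilbertFactorization 𝕜 T) : HilbertFactorization 𝕜 (c • T) where
  H := F.H
  A := F.A
  B := c • F.B
  K := ‖c‖₊ * F.K
  lipschitz := (lipschitzWith_smul c).comp_lipschitzOnWith F.lipschitz
  factors x := by simp [F.factors]

theorem cost_smul (c : 𝕜) (F : HilbertFactorization 𝕜 T) : (F.smul c).cost = ‖c‖ * F.cost := by
  change ‖F.A‖ * ((‖c‖₊ * F.K : ℝ≥0) : ℝ) = ‖c‖ * (‖F.A‖ * F.K)
  push_cast
  ring

def rescale (F : HilbertFactorization 𝕜 T) {t : 𝕜} (ht : t ≠ 0) : HilbertFactorization 𝕜 T where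
  H := F.H
  A := t • F.A
  B := F.B ∘ (t⁻¹ • ·)
  K := F.K * ‖t⁻¹‖₊
  lipschitz := F.lipschitz.comp (lipschitzWith_smul t⁻¹).lipschitzOnWith <| by
    rintro _ ⟨x, rfl⟩
    exact ⟨x, by simp [inv_smul_smul₀ ht]⟩
  factors x := by simp [inv_smul_smul₀ ht, F.factors]

theorem norm_rescale_A (F : HilbertFactorization 𝕜 T) {t : 𝕜} (ht : t ≠ 0) :
    ‖(F.rescale ht).A‖ = ‖t‖ * ‖F.A‖ :=
  norm_smul t F.A

theorem rescale_K (F : HilbertFactorization 𝕜 T) {t : 𝕜} (ht : t ≠ 0) :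
    ((F.rescale ht).K : ℝ) = F.K / ‖t‖ := by
  simp [rescale, div_eq_mul_inv]

theorem exists_balanced (F : HilbertFactorization 𝕜 T) (hF : 0 < F.cost) :
    ∃ F' : HilbertFactorization 𝕜 T, F'.cost = F.cost ∧ ‖F'.A‖ = F'.K := by
  obtain ⟨hA, hK⟩ : 0 < ‖F.A‖ ∧ 0 < (F.K : ℝ) :=
    (pos_and_pos_or_neg_and_neg_of_mul_pos hF).resolve_right fun h => (norm_nonneg _).not_gt h.1
  set s := √(F.K / ‖F.A‖)
  have hs : 0 < s := Real.sqrt_pos.2 (div_pos hK hA)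
  have hs2 : s ^ 2 = F.K / ‖F.A‖ := Real.sq_sqrt (div_pos hK hA).le
  have ht : (s : 𝕜) ≠ 0 := RCLike.ofReal_ne_zero.2 hs.ne'
  have hnorm : ‖(s : 𝕜)‖ = s := by rw [RCLike.norm_ofReal, abs_of_pos hs]
  refine ⟨F.rescale ht, ?_, ?_⟩
  · simp only [cost, norm_rescale_A, rescale_K, hnorm]
    field_simp
  · rw [norm_rescale_A, rescale_K, hnorm, eq_div_iff hs.ne']
    calc s * ‖F.A‖ * s = s ^ 2 * ‖F.A‖ := by ring
      _ = F.K := by rw [hs2]; field_simp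

def add (F : HilbertFactorization 𝕜 T) (G : HilbertFactorization 𝕜 S) :
    HilbertFactorization 𝕜 (T + S) where
  H := WithLp 2 (F.H × G.H)
  A := (WithLp.prodContinuousLinearEquiv 2 𝕜 F.H G.H).symm.toContinuousLinearMap
    |>.compContinuousMultilinearMap (F.A.prod G.A)
  B p := F.B p.fst + G.B p.snd
  K := NNReal.sqrt (F.K ^ 2 + G.K ^ 2)
  lipschitz := F.lipschitz.fst_add_snd_withLp G.lipschitz |>.mono <| by
    rintro _ ⟨x, rfl⟩
    exact ⟨⟨x, rfl⟩, ⟨x, rfl⟩⟩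
  factors x := by simp [F.factors, G.factors]

theorem norm_add_A_le (F : HilbertFactorization 𝕜 T) (G : HilbertFactorization 𝕜 S) :
    ‖(F.add G).A‖ ≤ √(‖F.A‖ ^ 2 + ‖G.A‖ ^ 2) := by
  refine ContinuousMultilinearMap.opNorm_le_bound (Real.sqrt_nonneg _) fun x => ?_
  rw [show ‖(F.add G).A x‖ = √(‖F.A x‖ ^ 2 + ‖G.A x‖ ^ 2) from WithLp.prod_norm_eq_of_L2 _,
    ← Real.sqrt_sq (Finset.prod_nonneg fun i _ => norm_nonneg (x i)),
    ← Real.sqrt_mul (by positivity)]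
  gcongr
  rw [add_mul, ← mul_pow, ← mul_pow]
  gcongr
  exacts [F.A.le_opNorm x, G.A.le_opNorm x]

theorem cost_add_le_of_balanced (F : HilbertFactorization 𝕜 T) (G : HilbertFactorization 𝕜 S)
    (hF : ‖F.A‖ = F.K) (hG : ‖G.A‖ = G.K) : (F.add G).cost ≤ F.cost + G.cost := by
  have hK : ((F.add G).K : ℝ) = √(F.K ^ 2 + G.K ^ 2) := by simp [add, Real.coe_sqrt]
  calc (F.add G).cost ≤ √(‖F.A‖ ^ 2 + ‖G.A‖ ^ 2) * √(F.K ^ 2 + G.K ^ 2) := by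
        rw [cost, hK]; gcongr; exact F.norm_add_A_le G
    _ = F.cost + G.cost := by
        rw [← hF, ← hG, Real.mul_self_sqrt (by positivity), cost, cost, hF, hG]; ring

end HilbertFactorization

section gammaNorm

variable {n : ℕ} {X : Fin n → Type u} {Y : Type u}
  [∀ i, NormedAddCommGroup (X i)] [∀ i, NormedSpace 𝕜 (X i)]
  [NormedAddCommGroup Y] [NormedSpace 𝕜 Y]
  {T S : ContinuousMultilinearMap 𝕜 X Y}

theorem factorsThroughHilbert_zero :
    FactorsThroughHilbert (0 : ContinuousMultilinearMap 𝕜 X Y) :=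
  ⟨.zero⟩

theorem FactorsThroughHilbert.add (hT : FactorsThroughHilbert T) (hS : FactorsThroughHilbert S) :
    FactorsThroughHilbert (T + S) :=
  let ⟨F⟩ := hT; let ⟨G⟩ := hS; ⟨F.add G⟩

theorem FactorsThroughHilbert.smul (c : 𝕜) (hT : FactorsThroughHilbert T) :
    FactorsThroughHilbert (c • T) :=
  let ⟨F⟩ := hT; ⟨F.smul c⟩

theorem gammaNorm_le_cost (F : HilbertFactorization 𝕜 T) : gammaNorm T ≤ F.cost :=
  csInf_le ⟨0, by rintro _ ⟨F, rfl⟩; exact F.cost_nonneg⟩ ⟨F, rfl⟩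

theorem le_gammaNorm {c : ℝ} (hT : FactorsThroughHilbert T)
    (h : ∀ F : HilbertFactorization 𝕜 T, c ≤ F.cost) : c ≤ gammaNorm T :=
  le_csInf (let ⟨F⟩ := hT; ⟨_, F, rfl⟩) (by rintro _ ⟨F, rfl⟩; exact h F)

theorem gammaNorm_zero : gammaNorm (0 : ContinuousMultilinearMap 𝕜 X Y) = 0 :=
  le_antisymm ((gammaNorm_le_cost .zero).trans_eq HilbertFactorization.cost_zero)
    (le_gammaNorm factorsThroughHilbert_zero fun F => F.cost_nonneg)

theorem opNorm_le_gammaNorm (hn : 0 < n) (hT : FactorsThroughHilbert T) : ‖T‖ ≤ gammaNorm T :=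
  le_gammaNorm hT (·.opNorm_le_cost hn)

theorem gammaNorm_eq_zero_iff (hn : 0 < n) (hT : FactorsThroughHilbert T) :
    gammaNorm T = 0 ↔ T = 0 := by
  refine ⟨fun h => norm_le_zero_iff.1 (h ▸ opNorm_le_gammaNorm hn hT), ?_⟩
  rintro rfl
  exact gammaNorm_zero

theorem gammaNorm_smul_le (c : 𝕜) (hT : FactorsThroughHilbert T) :
    gammaNorm (c • T) ≤ ‖c‖ * gammaNorm T := by
  rcases eq_or_ne c 0 with rfl | hc
  · simp [gammaNorm_zero]
  have hc' : 0 < ‖c‖ := norm_pos_iff.2 hc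
  rw [← div_le_iff₀' hc']
  exact le_gammaNorm hT fun F => (div_le_iff₀' hc').2 <|
    (gammaNorm_le_cost (F.smul c)).trans_eq (F.cost_smul c)

theorem gammaNorm_smul (c : 𝕜) (hT : FactorsThroughHilbert T) :
    gammaNorm (c • T) = ‖c‖ * gammaNorm T := by
  rcases eq_or_ne c 0 with rfl | hc
  · simp [gammaNorm_zero]
  refine (gammaNorm_smul_le c hT).antisymm ?_
  have h := gammaNorm_smul_le c⁻¹ (hT.smul c)
  rw [inv_smul_smul₀ hc, norm_inv] at h
  calc ‖c‖ * gammaNorm T ≤ ‖c‖ * (‖c‖⁻¹ * gammaNorm (c • T)) := by gcongr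
    _ = gammaNorm (c • T) := by field_simp

theorem gammaNorm_add_le_cost_add_cost (hn : 0 < n) (F : HilbertFactorization 𝕜 T)
    (G : HilbertFactorization 𝕜 S) : gammaNorm (T + S) ≤ F.cost + G.cost := by
  rcases eq_or_ne T 0 with rfl | hT
  · simpa using (gammaNorm_le_cost G).trans (le_add_of_nonneg_left F.cost_nonneg)
  rcases eq_or_ne S 0 with rfl | hS
  · simpa using (gammaNorm_le_cost F).trans (le_add_of_nonneg_right G.cost_nonneg)
  obtain ⟨F', hF'cost, hF'⟩ := F.exists_balanced (F.cost_pos hn hT)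
  obtain ⟨G', hG'cost, hG'⟩ := G.exists_balanced (G.cost_pos hn hS)
  calc gammaNorm (T + S) ≤ (F'.add G').cost := gammaNorm_le_cost _
    _ ≤ F'.cost + G'.cost := F'.cost_add_le_of_balanced G' hF' hG'
    _ = F.cost + G.cost := by rw [hF'cost, hG'cost]

theorem gammaNorm_add_le (hn : 0 < n) (hT : FactorsThroughHilbert T)
    (hS : FactorsThroughHilbert S) : gammaNorm (T + S) ≤ gammaNorm T + gammaNorm S := by
  have h : gammaNorm (T + S) - gammaNorm S ≤ gammaNorm T :=
    le_gammaNorm hT fun F => sub_le_comm.1 <|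
      le_gammaNorm hS fun G => sub_le_iff_le_add'.2 (gammaNorm_add_le_cost_add_cost hn F G)
  linarith

end gammaNorm

theorem gammaNorm_isNorm_general {n : ℕ} (hn : 0 < n) {X : Fin n → Type u} {Y : Type u}
    [∀ i, NormedAddCommGroup (X i)] [∀ i, NormedSpace 𝕜 (X i)]
    [NormedAddCommGroup Y] [NormedSpace 𝕜 Y] :
    FactorsThroughHilbert (0 : ContinuousMultilinearMap 𝕜 X Y) ∧
    (∀ T S : ContinuousMultilinearMap 𝕜 X Y, FactorsThroughHilbert T →
      FactorsThroughHilbert S →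
        FactorsThroughHilbert (T + S) ∧ gammaNorm (T + S) ≤ gammaNorm T + gammaNorm S) ∧
    (∀ (c : 𝕜) (T : ContinuousMultilinearMap 𝕜 X Y), FactorsThroughHilbert T →
        FactorsThroughHilbert (c • T) ∧ gammaNorm (c • T) = ‖c‖ * gammaNorm T) ∧
    (∀ T : ContinuousMultilinearMap 𝕜 X Y, FactorsThroughHilbert T →
        (gammaNorm T = 0 ↔ T = 0)) :=
  ⟨factorsThroughHilbert_zero,
    fun _ _ hT hS => ⟨hT.add hS, gammaNorm_add_le hn hT hS⟩,
    fun c _ hT => ⟨hT.smul c, gammaNorm_smul c hT⟩,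
    fun _ hT => gammaNorm_eq_zero_iff hn hT⟩

/-- For all Banach spaces `X₁,…,Xₙ, Y`, the set of bounded multilinear
operators `X₁ × ⋯ × Xₙ → Y` factoring through a Hilbert space is a linear subspace of the
bounded multilinear operators and `Γ` is a norm on it: it contains `0`, is closed under
addition and scalar multiplication, `Γ` is subadditive, absolutely homogeneous, and
`Γ(T) = 0` iff `T = 0` (on operators that factor). -/
theorem gammaNorm_isNorm {n : ℕ} (hn : 0 < n) {X : Fin n → Type u} {Y : Type u}
    [∀ i, NormedAddCommGroup (X i)] [∀ i, NormedSpace 𝕜 (X i)] [∀ i, CompleteSpace (X i)]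
    [NormedAddCommGroup Y] [NormedSpace 𝕜 Y] [CompleteSpace Y] :
    FactorsThroughHilbert (0 : ContinuousMultilinearMap 𝕜 X Y) ∧
    (∀ T S : ContinuousMultilinearMap 𝕜 X Y, FactorsThroughHilbert T →
      FactorsThroughHilbert S →
        FactorsThroughHilbert (T + S) ∧ gammaNorm (T + S) ≤ gammaNorm T + gammaNorm S) ∧
    (∀ (c : 𝕜) (T : ContinuousMultilinearMap 𝕜 X Y), FactorsThroughHilbert T →
        FactorsThroughHilbert (c • T) ∧ gammaNorm (c • T) = ‖c‖ * gammaNorm T) ∧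
    (∀ T : ContinuousMultilinearMap 𝕜 X Y, FactorsThroughHilbert T →
        (gammaNorm T = 0 ↔ T = 0)) :=
  gammaNorm_isNorm_general hn
end
end

section
/- Let X₁,…,Xₙ, Y, Z₁,…,Z_m, W be Banach spaces, let R : Z₁ × ⋯ × Z_m → X₁ ⊗̂_π ⋯ ⊗̂_π Xₙ be a bounded multilinear operator whose associated Σ-operator maps Σ_{Z₁,…,Z_m} into Σ_{X₁,…,Xₙ} (i.e. R sends m-tuples to decomposable tensors), and let S : Y → W be a bounded linear operator. If T ∈ Γ(X₁,…,Xₙ;Y), then the bounded multilinear operator S ∘ f_T ∘ R : Z₁ × ⋯ × Z_m → W belongs to Γ(Z₁,…,Z_m;W) and Γ(S f_T R) ≤ ‖R‖ · Γ(T) · ‖S‖. -/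
open scoped NNReal

noncomputable section

universe u

variable (𝕜 : Type u) [RCLike 𝕜]

variable {𝕜}

open scoped TensorProduct
open PiTensorProduct

section HilbertFactorization

variable {n m : ℕ} {X : Fin n → Type u} {Y : Type u} {Z : Fin m → Type u} {W : Type u}
  [∀ i, NormedAddCommGroup (X i)] [∀ i, NormedSpace 𝕜 (X i)]
  [NormedAddCommGroup Y] [NormedSpace 𝕜 Y]
  [∀ i, NormedAddCommGroup (Z i)] [∀ i, NormedSpace 𝕜 (Z i)]
  [NormedAddCommGroup W] [NormedSpace 𝕜 W]

theorem gammaNorm_nonneg (T : ContinuousMultilinearMap 𝕜 X Y) : 0 ≤ gammaNorm T :=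
  Real.sInf_nonneg <| by rintro _ ⟨F, rfl⟩; positivity

theorem HilbertFactorization.gammaNorm_le {T : ContinuousMultilinearMap 𝕜 X Y}
    (F : HilbertFactorization 𝕜 T) : gammaNorm T ≤ ‖F.A‖ * F.K :=
  csInf_le ⟨0, by rintro _ ⟨G, rfl⟩; positivity⟩ ⟨F, rfl⟩

theorem le_mul_gammaNorm {T : ContinuousMultilinearMap 𝕜 X Y} (hT : FactorsThroughHilbert T)
    {a b : ℝ} (ha : 0 ≤ a) (h : ∀ F : HilbertFactorization 𝕜 T, b ≤ a * (‖F.A‖ * F.K)) :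
    b ≤ a * gammaNorm T := by
  obtain ⟨F⟩ := hT
  rw [gammaNorm, ← smul_eq_mul, ← Real.sInf_smul_of_nonneg ha]
  refine le_csInf (Set.Nonempty.smul_set ⟨_, F, rfl⟩) ?_
  rintro _ ⟨_, ⟨G, rfl⟩, rfl⟩
  exact h G

theorem range_liftIsometry_comp_subset {E : Type*} [NormedAddCommGroup E] [NormedSpace 𝕜 E]
    (f : ContinuousMultilinearMap 𝕜 X E) {R : ContinuousMultilinearMap 𝕜 Z (⨂[𝕜] i, X i)}
    (hR : Set.range R ⊆ Set.range (tprodL 𝕜)) :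
    Set.range ((liftIsometry 𝕜 X E f).compContinuousMultilinearMap R) ⊆ Set.range f := by
  rintro _ ⟨z, rfl⟩
  obtain ⟨x, hx⟩ := hR ⟨z, rfl⟩
  exact ⟨x, by simp [← hx]⟩

/-- `(S ∘ B) ∘ (f_A ∘ R)` factors `S ∘ f_T ∘ R` because `R` takes values in decomposable
tensors, on which `f_T = B ∘ f_A`. -/
def HilbertFactorization.compSigmaOperator {T : ContinuousMultilinearMap 𝕜 X Y}
    (F : HilbertFactorization 𝕜 T) (R : ContinuousMultilinearMap 𝕜 Z (⨂[𝕜] i, X i))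
    (hR : Set.range R ⊆ Set.range (tprodL 𝕜)) (S : Y →L[𝕜] W) :
    HilbertFactorization 𝕜 ((S ∘L liftIsometry 𝕜 X Y T).compContinuousMultilinearMap R) where
  H := F.H
  A := (liftIsometry 𝕜 X F.H F.A).compContinuousMultilinearMap R
  B := S ∘ F.B
  K := ‖S‖₊ * F.K
  lipschitz := S.lipschitz.comp_lipschitzOnWith
    (F.lipschitz.mono (range_liftIsometry_comp_subset F.A hR))
  factors z := by
    obtain ⟨x, hx⟩ := hR ⟨z, rfl⟩
    simp [← hx, F.factors x]

theorem HilbertFactorization.norm_A_mul_K_compSigmaOperator_le {T : ContinuousMultilinearMap 𝕜 X Y}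
    (F : HilbertFactorization 𝕜 T) (R : ContinuousMultilinearMap 𝕜 Z (⨂[𝕜] i, X i))
    (hR : Set.range R ⊆ Set.range (tprodL 𝕜)) (S : Y →L[𝕜] W) :
    ‖(F.compSigmaOperator R hR S).A‖ * (F.compSigmaOperator R hR S).K ≤
      ‖R‖ * (‖F.A‖ * F.K) * ‖S‖ := by
  calc _ = ‖(liftIsometry 𝕜 X F.H F.A).compContinuousMultilinearMap R‖ * (‖S‖ * F.K) := rfl
    _ ≤ ‖F.A‖ * ‖R‖ * (‖S‖ * F.K) := by
        gcongr
        simpa using (liftIsometry 𝕜 X F.H F.A).norm_compContinuousMultilinearMap_le R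
    _ = ‖R‖ * (‖F.A‖ * F.K) * ‖S‖ := by ring

theorem gammaNorm_comp_liftIsometry_comp_le {T : ContinuousMultilinearMap 𝕜 X Y}
    (hT : FactorsThroughHilbert T) {R : ContinuousMultilinearMap 𝕜 Z (⨂[𝕜] i, X i)}
    (hR : Set.range R ⊆ Set.range (tprodL 𝕜)) (S : Y →L[𝕜] W) :
    gammaNorm ((S ∘L liftIsometry 𝕜 X Y T).compContinuousMultilinearMap R) ≤
      ‖R‖ * gammaNorm T * ‖S‖ := by
  refine (le_mul_gammaNorm hT (by positivity : 0 ≤ ‖R‖ * ‖S‖) fun F => ?_).trans_eq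
    (by ring)
  exact (F.compSigmaOperator R hR S).gammaNorm_le.trans <|
    (F.norm_A_mul_K_compSigmaOperator_le R hR S).trans_eq (by ring)

end HilbertFactorization

theorem comp_sigmaOperator_factorsThroughHilbert_general {n m : ℕ}
    {X : Fin n → Type u} {Y : Type u} {Z : Fin m → Type u} {W : Type u}
    [∀ i, NormedAddCommGroup (X i)] [∀ i, NormedSpace 𝕜 (X i)]
    [NormedAddCommGroup Y] [NormedSpace 𝕜 Y]
    [∀ i, NormedAddCommGroup (Z i)] [∀ i, NormedSpace 𝕜 (Z i)]
    [NormedAddCommGroup W] [NormedSpace 𝕜 W]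
    (T : ContinuousMultilinearMap 𝕜 X Y) (hT : FactorsThroughHilbert T)
    (R : MultilinearMap 𝕜 Z (⨂[𝕜] i, X i)) (C : ℝ) (hC : 0 ≤ C)
    (hR : ∀ z : ∀ i, Z i, projectiveSeminorm (R z) ≤ C * ∏ i, ‖z i‖)
    (hdec : ∀ z : ∀ i, Z i, ∃ x : ∀ i, X i, R z = ⨂ₜ[𝕜] i, x i)
    (S : Y →L[𝕜] W) :
    ∃ N : ContinuousMultilinearMap 𝕜 Z W,
      (∀ z, N z = S (PiTensorProduct.lift T.toMultilinearMap (R z))) ∧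
      FactorsThroughHilbert N ∧ gammaNorm N ≤ C * gammaNorm T * ‖S‖ := by
  let R' := R.mkContinuous C hR
  have hR' : Set.range R' ⊆ Set.range (tprodL 𝕜) := by
    rintro _ ⟨z, rfl⟩
    obtain ⟨x, hx⟩ := hdec z
    exact ⟨x, hx.symm⟩
  refine ⟨(S ∘L liftIsometry 𝕜 X Y T).compContinuousMultilinearMap R', fun _ => rfl,
    hT.map fun F => F.compSigmaOperator R' hR' S, ?_⟩
  calc _ ≤ ‖R'‖ * gammaNorm T * ‖S‖ := gammaNorm_comp_liftIsometry_comp_le hT hR' S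
    _ ≤ C * gammaNorm T * ‖S‖ := by
      have := gammaNorm_nonneg T
      gcongr
      exact R.mkContinuous_norm_le hC hR

/-- Let `X₁,…,Xₙ, Y, Z₁,…,Z_m, W` be Banach spaces, let
`R : Z₁ × ⋯ × Z_m → X₁ ⊗̂_π ⋯ ⊗̂_π Xₙ` be a bounded multilinear operator (bounded for the
projective norm, with bound `C`) mapping tuples to decomposable tensors, and let
`S : Y → W` be a bounded linear operator.  If `T ∈ Γ(X₁,…,Xₙ;Y)`, then the bounded
multilinear operator `S ∘ f_T ∘ R : Z₁ × ⋯ × Z_m → W` (where `f_T` is the `Σ`-operator of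
`T`, i.e. the linearization of `T` on tensors) belongs to `Γ(Z₁,…,Z_m;W)` and
`Γ(S f_T R) ≤ C · Γ(T) · ‖S‖`; taking the infimum over admissible bounds `C` gives
`Γ(S f_T R) ≤ ‖R‖ · Γ(T) · ‖S‖`. -/
theorem comp_sigmaOperator_factorsThroughHilbert {n m : ℕ}
    (hn : 0 < n) (hm : 0 < m)
    {X : Fin n → Type u} {Y : Type u} {Z : Fin m → Type u} {W : Type u}
    [∀ i, NormedAddCommGroup (X i)] [∀ i, NormedSpace 𝕜 (X i)] [∀ i, CompleteSpace (X i)]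
    [NormedAddCommGroup Y] [NormedSpace 𝕜 Y] [CompleteSpace Y]
    [∀ i, NormedAddCommGroup (Z i)] [∀ i, NormedSpace 𝕜 (Z i)] [∀ i, CompleteSpace (Z i)]
    [NormedAddCommGroup W] [NormedSpace 𝕜 W] [CompleteSpace W]
    (T : ContinuousMultilinearMap 𝕜 X Y) (hT : FactorsThroughHilbert T)
    (R : MultilinearMap 𝕜 Z (⨂[𝕜] i, X i)) (C : ℝ) (hC : 0 ≤ C)
    (hR : ∀ z : ∀ i, Z i, projectiveSeminorm (R z) ≤ C * ∏ i, ‖z i‖)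
    (hdec : ∀ z : ∀ i, Z i, ∃ x : ∀ i, X i, R z = ⨂ₜ[𝕜] i, x i)
    (S : Y →L[𝕜] W) :
    ∃ N : ContinuousMultilinearMap 𝕜 Z W,
      (∀ z, N z = S (PiTensorProduct.lift T.toMultilinearMap (R z))) ∧
      FactorsThroughHilbert N ∧ gammaNorm N ≤ C * gammaNorm T * ‖S‖ :=
  comp_sigmaOperator_factorsThroughHilbert_general T hT R C hC hR hdec S
end
end

section
/- Let X₁,…,Xₙ, Y be Banach spaces. The function γ is a norm on the algebraic tensor product X₁ ⊗ ⋯ ⊗ Xₙ ⊗ Y, and for all decomposable tensors p, q ∈ Σ_{X₁,…,Xₙ} and all y ∈ Y one has γ((p − q) ⊗ y) ≤ π(p − q) · ‖y‖. -/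
open scoped NNReal

noncomputable section

universe u

variable (𝕜 : Type u) [RCLike 𝕜]

variable {𝕜}

open scoped TensorProduct
open PiTensorProduct

variable (𝕜)

/-- The relation `≤_π` between finite families of (pairs of) decomposable tensors,
parametrized by the generating tuples: `(pᵢ, qᵢ) ≤_π (aᵢ, bᵢ)` iff
`∑ᵢ |f_φ(pᵢ) − f_φ(qᵢ)|² ≤ ∑ᵢ |f_φ(aᵢ) − f_φ(bᵢ)|²` for every bounded multilinear
functional `φ` on `X₁ × ⋯ × Xₙ`. -/
def LePi {n m : ℕ} {X : Fin n → Type u}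
    [∀ i, NormedAddCommGroup (X i)] [∀ i, NormedSpace 𝕜 (X i)]
    (p q a b : Fin m → ∀ i, X i) : Prop :=
  ∀ φ : ContinuousMultilinearMap 𝕜 X 𝕜,
    ∑ i, ‖φ (p i) - φ (q i)‖ ^ 2 ≤ ∑ i, ‖φ (a i) - φ (b i)‖ ^ 2

/-- The tensor norm `γ` on `X₁ ⊗ ⋯ ⊗ Xₙ ⊗ Y`:
`γ(u) = inf (∑ᵢ π(aᵢ − bᵢ)²)^{1/2} (∑ᵢ ‖yᵢ‖²)^{1/2}`, the infimum over all representations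
`u = ∑ᵢ (pᵢ − qᵢ) ⊗ yᵢ` with `pᵢ, qᵢ, aᵢ, bᵢ` decomposable and `(pᵢ, qᵢ) ≤_π (aᵢ, bᵢ)`. -/
def gammaTensor {n : ℕ} {X : Fin n → Type u} {Y : Type u}
    [∀ i, NormedAddCommGroup (X i)] [∀ i, NormedSpace 𝕜 (X i)]
    [NormedAddCommGroup Y] [NormedSpace 𝕜 Y]
    (u : (⨂[𝕜] i, X i) ⊗[𝕜] Y) : ℝ :=
  sInf {r : ℝ | ∃ (m : ℕ) (p q a b : Fin m → ∀ i, X i) (y : Fin m → Y),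
    (u = ∑ i, ((⨂ₜ[𝕜] j, p i j) - ⨂ₜ[𝕜] j, q i j) ⊗ₜ[𝕜] y i) ∧
    LePi 𝕜 p q a b ∧
    r = Real.sqrt (∑ i, projectiveSeminorm ((⨂ₜ[𝕜] j, a i j) - ⨂ₜ[𝕜] j, b i j) ^ 2) *
        Real.sqrt (∑ i, ‖y i‖ ^ 2)}

variable {𝕜}

/-! The representations defining `γ` can be concatenated, scaled by `c` in the `Y`-factor, and
rebalanced by scaling one tensor factor by `t` and the `yᵢ` by `t⁻¹`, which multiplies
`∑ π(aᵢ − bᵢ)²` by `|t|²` and `∑ ‖yᵢ‖²` by `|t|⁻²`. Scaling gives `γ(c u) ≤ |c| γ(u)`; for the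
triangle inequality, rebalance near-optimal representations of `u` and `v` until both of their
sums are close to their `γ`-values, and concatenate them.

For definiteness, a bounded `n`-linear `φ` contracts `u = ∑ (pᵢ − qᵢ) ⊗ yᵢ` to
`∑ (φ pᵢ − φ qᵢ) yᵢ ∈ Y`, whose norm is at most `‖φ‖ γ(u)` by Cauchy–Schwarz and `≤_π`. These
contractions separate points: only finitely many finite-dimensional subspaces of the `Xᵢ` are
involved, and on them every multilinear form is the restriction of a bounded one. -/

/-- A regularisation of `s = √B / √A`, which balances exactly when `A ≠ 0`. -/
lemma exists_pos_mul_le_and_inv_mul_le {A B ε : ℝ} (hA : 0 ≤ A) (hB : 0 ≤ B) (hε : 0 < ε) :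
    ∃ s : ℝ, 0 < s ∧ s * A ≤ √A * √B + ε ∧ s⁻¹ * B ≤ √A * √B + ε := by
  obtain ⟨P, hP, rfl⟩ : ∃ P, 0 ≤ P ∧ A = P ^ 2 := ⟨√A, Real.sqrt_nonneg A, (Real.sq_sqrt hA).symm⟩
  obtain ⟨Q, hQ, rfl⟩ : ∃ Q, 0 ≤ Q ∧ B = Q ^ 2 := ⟨√B, Real.sqrt_nonneg B, (Real.sq_sqrt hB).symm⟩
  rw [Real.sqrt_sq hP, Real.sqrt_sq hQ]
  set δ := ε / (P + Q + 1)
  have hδ : 0 < δ := by positivity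
  have hδε : δ * (P + Q + 1) = ε := div_mul_cancel₀ ε (by positivity)
  refine ⟨(Q + δ) / (P + δ), by positivity, ?_, ?_⟩
  · rw [div_mul_eq_mul_div, div_le_iff₀ (by positivity)]
    nlinarith [mul_nonneg hδ.le hP, mul_nonneg hδ.le hQ, mul_nonneg (mul_nonneg hδ.le hP) hQ]
  · rw [inv_div, div_mul_eq_mul_div, div_le_iff₀ (by positivity)]
    nlinarith [mul_nonneg hδ.le hP, mul_nonneg hδ.le hQ, mul_nonneg (mul_nonneg hδ.le hP) hQ]

theorem TensorProduct.eq_zero_of_forall_rTensor_eq_zero {K M N ι : Type*} [Field K]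
    [AddCommGroup M] [Module K M] [AddCommGroup N] [Module K N]
    (f : ι → Module.Dual K M) (hf : ∀ m, (∀ i, f i m = 0) → m = 0) (u : M ⊗[K] N)
    (hu : ∀ i, (f i).rTensor N u = 0) : u = 0 := by
  classical
  let e := Module.Free.chooseBasis K N
  obtain ⟨c, rfl⟩ := TensorProduct.eq_repr_basis_right e u
  suffices c = 0 by simp [this]
  ext k
  refine hf _ fun i => ?_
  have h := TensorProduct.sum_tmul_basis_right_eq_zero e (c.mapRange (f i) (map_zero _)) (by
    rw [Finsupp.sum_mapRange_index (fun k => TensorProduct.zero_tmul K (e k)), ← hu i,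
      Finsupp.sum, Finsupp.sum, map_sum]
    simp)
  simpa using DFunLike.congr_fun h k

section Separation

variable {ι : Type*} [Fintype ι] {E : ι → Type*}
  [∀ i, NormedAddCommGroup (E i)] [∀ i, NormedSpace 𝕜 (E i)]

theorem MultilinearMap.exists_continuous_eqOn_pi (V : ∀ i, Submodule 𝕜 (E i))
    [∀ i, FiniteDimensional 𝕜 (V i)] (M : MultilinearMap 𝕜 E 𝕜) :
    ∃ φ : ContinuousMultilinearMap 𝕜 E 𝕜, ∀ v, (∀ i, v i ∈ V i) → φ v = M v := by
  classical
  choose P hP using fun i => Submodule.ClosedComplemented.of_finiteDimensional (V i)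
  let b := fun i => Module.finBasis 𝕜 (V i)
  -- `φ` expands `M` in the bases `b i`, with the coordinates extended to `E i` through `P i`.
  let g : ∀ i, Fin (Module.finrank 𝕜 (V i)) → E i →L[𝕜] 𝕜 := fun i β =>
    (LinearMap.toContinuousLinearMap ((b i).coord β)).comp (P i)
  have hg : ∀ i β (w : V i), g i β w = (b i).repr w β := fun i β w => by
    simp [g, hP]
  refine ⟨∑ α : ∀ i, Fin (Module.finrank 𝕜 (V i)), M (fun i => b i (α i)) •
      (ContinuousMultilinearMap.mkPiAlgebra 𝕜 ι 𝕜).compContinuousLinearMap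
        (fun i => g i (α i)), fun v hv => ?_⟩
  have hv' : v = fun i => ∑ β, (b i).repr ⟨v i, hv i⟩ β • (b i β : E i) := by
    funext i
    simpa only [Submodule.coe_sum, Submodule.coe_smul] using
      (congrArg Subtype.val ((b i).sum_repr ⟨v i, hv i⟩)).symm
  conv_rhs => rw [hv', M.map_sum]
  rw [sum_apply]
  refine Finset.sum_congr rfl fun α _ => ?_
  rw [M.map_smul_univ]
  simp [hg _ _ ⟨v _, hv _⟩, mul_comm]

theorem PiTensorProduct.eq_zero_of_forall_lift_eq_zero (s : ⨂[𝕜] i, E i)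
    (h : ∀ φ : ContinuousMultilinearMap 𝕜 E 𝕜, lift φ.toMultilinearMap s = 0) : s = 0 := by
  classical
  have hs : s ∈ Submodule.span 𝕜 (Set.range (tprod 𝕜 (s := E))) := by
    rw [span_tprod_eq_top]; trivial
  obtain ⟨m, c, z, rfl⟩ := Submodule.mem_span_set'.mp hs
  choose x hx using fun k => (z k).2
  let V : ∀ i, Submodule 𝕜 (E i) := fun i => Submodule.span 𝕜 (Set.range fun k => x k i)
  have : ∀ i, FiniteDimensional 𝕜 (V i) := fun i =>
    FiniteDimensional.span_of_finite 𝕜 (Set.finite_range _)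
  refine (Module.forall_dual_apply_eq_zero_iff 𝕜 _).mp fun f => ?_
  obtain ⟨φ, hφ⟩ := (lift.symm f).exists_continuous_eqOn_pi V
  rw [← h φ, map_sum, map_sum]
  refine Finset.sum_congr rfl fun k _ => ?_
  have hxV : ∀ i, x k i ∈ V i := fun i => Submodule.subset_span ⟨k, rfl⟩
  rw [map_smul, map_smul, ← hx k, lift.tprod, ContinuousMultilinearMap.coe_coe, hφ _ hxV,
    lift_symm, LinearMap.compMultilinearMap_apply]

end Separation

section Gamma

variable {n : ℕ} {X : Fin n → Type u} {Y : Type u}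
  [∀ i, NormedAddCommGroup (X i)] [∀ i, NormedSpace 𝕜 (X i)]
  [NormedAddCommGroup Y] [NormedSpace 𝕜 Y]

def contractPi (φ : ContinuousMultilinearMap 𝕜 X 𝕜) : (⨂[𝕜] i, X i) ⊗[𝕜] Y →ₗ[𝕜] Y :=
  TensorProduct.lid 𝕜 Y ∘ₗ (lift φ.toMultilinearMap).rTensor Y

lemma contractPi_tmul (φ : ContinuousMultilinearMap 𝕜 X 𝕜) (s : ⨂[𝕜] i, X i) (y : Y) :
    contractPi φ (s ⊗ₜ[𝕜] y) = lift φ.toMultilinearMap s • y := by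
  simp [contractPi]

lemma eq_zero_of_forall_contractPi_eq_zero (u : (⨂[𝕜] i, X i) ⊗[𝕜] Y)
    (h : ∀ φ : ContinuousMultilinearMap 𝕜 X 𝕜, contractPi φ u = 0) : u = 0 :=
  TensorProduct.eq_zero_of_forall_rTensor_eq_zero
    (fun φ : ContinuousMultilinearMap 𝕜 X 𝕜 => lift φ.toMultilinearMap)
    PiTensorProduct.eq_zero_of_forall_lift_eq_zero u fun φ => by
      simpa [contractPi] using h φ

variable (𝕜) in
structure GammaRep (u : (⨂[𝕜] i, X i) ⊗[𝕜] Y) where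
  m : ℕ
  p : Fin m → ∀ i, X i
  q : Fin m → ∀ i, X i
  a : Fin m → ∀ i, X i
  b : Fin m → ∀ i, X i
  y : Fin m → Y
  eq_sum : u = ∑ k, ((⨂ₜ[𝕜] j, p k j) - ⨂ₜ[𝕜] j, q k j) ⊗ₜ[𝕜] y k
  lePi : LePi 𝕜 p q a b

namespace GammaRep

variable {u v : (⨂[𝕜] i, X i) ⊗[𝕜] Y}

def piSq (R : GammaRep 𝕜 u) : ℝ :=
  ∑ k, projectiveSeminorm ((⨂ₜ[𝕜] j, R.a k j) - ⨂ₜ[𝕜] j, R.b k j) ^ 2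

def normSq (R : GammaRep 𝕜 u) : ℝ := ∑ k, ‖R.y k‖ ^ 2

def cost (R : GammaRep 𝕜 u) : ℝ := √R.piSq * √R.normSq

lemma piSq_nonneg (R : GammaRep 𝕜 u) : 0 ≤ R.piSq := by unfold piSq; positivity

lemma normSq_nonneg (R : GammaRep 𝕜 u) : 0 ≤ R.normSq := by unfold normSq; positivity

lemma cost_nonneg (R : GammaRep 𝕜 u) : 0 ≤ R.cost := by unfold cost; positivity

def zero : GammaRep 𝕜 (0 : (⨂[𝕜] i, X i) ⊗[𝕜] Y) :=
  ⟨0, Fin.elim0, Fin.elim0, Fin.elim0, Fin.elim0, Fin.elim0, by simp, fun _ => le_rfl⟩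

lemma cost_zero : (zero : GammaRep 𝕜 (0 : (⨂[𝕜] i, X i) ⊗[𝕜] Y)).cost = 0 := by
  simp [cost, piSq, zero]

def single (x z : ∀ i, X i) (y : Y) :
    GammaRep 𝕜 (((⨂ₜ[𝕜] i, x i) - ⨂ₜ[𝕜] i, z i) ⊗ₜ[𝕜] y) :=
  ⟨1, fun _ => x, fun _ => z, fun _ => x, fun _ => z, fun _ => y, by simp, fun _ => le_rfl⟩

lemma cost_single (x z : ∀ i, X i) (y : Y) :
    (single x z y : GammaRep 𝕜 _).cost =
      projectiveSeminorm ((⨂ₜ[𝕜] i, x i) - ⨂ₜ[𝕜] i, z i) * ‖y‖ := by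
  show √(∑ _k : Fin 1, _) * √(∑ _k : Fin 1, ‖y‖ ^ 2) = _
  rw [Fin.sum_univ_one, Fin.sum_univ_one, Real.sqrt_sq (apply_nonneg _ _),
    Real.sqrt_sq (norm_nonneg _)]
  rfl

def append (R : GammaRep 𝕜 u) (S : GammaRep 𝕜 v) : GammaRep 𝕜 (u + v) where
  m := R.m + S.m
  p := Fin.append R.p S.p
  q := Fin.append R.q S.q
  a := Fin.append R.a S.a
  b := Fin.append R.b S.b
  y := Fin.append R.y S.y
  eq_sum := by simp [Fin.sum_univ_add, R.eq_sum, S.eq_sum]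
  lePi φ := by simpa [Fin.sum_univ_add] using add_le_add (R.lePi φ) (S.lePi φ)

lemma piSq_append (R : GammaRep 𝕜 u) (S : GammaRep 𝕜 v) :
    (R.append S).piSq = R.piSq + S.piSq := by
  unfold piSq
  exact (Fin.sum_univ_add _).trans (by simp [append])

lemma normSq_append (R : GammaRep 𝕜 u) (S : GammaRep 𝕜 v) :
    (R.append S).normSq = R.normSq + S.normSq := by
  unfold normSq
  exact (Fin.sum_univ_add _).trans (by simp [append])

def smul (c : 𝕜) (R : GammaRep 𝕜 u) : GammaRep 𝕜 (c • u) :=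
  { R with
    y := fun k => c • R.y k
    eq_sum := by simp [R.eq_sum, Finset.smul_sum, TensorProduct.tmul_smul] }

lemma cost_smul (c : 𝕜) (R : GammaRep 𝕜 u) : (R.smul c).cost = ‖c‖ * R.cost := by
  have hnormSq : (R.smul c).normSq = ‖c‖ ^ 2 * R.normSq := by
    unfold normSq
    rw [Finset.mul_sum]
    exact Finset.sum_congr rfl fun k _ => by simp [smul, norm_smul, mul_pow]
  rw [cost, cost, hnormSq, Real.sqrt_mul (sq_nonneg _), Real.sqrt_sq (norm_nonneg _)]
  change √R.piSq * _ = _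
  ring

def rescale (i₀ : Fin n) {c : 𝕜} (hc : c ≠ 0) (R : GammaRep 𝕜 u) : GammaRep 𝕜 u where
  m := R.m
  p k := Function.update (R.p k) i₀ (c • R.p k i₀)
  q k := Function.update (R.q k) i₀ (c • R.q k i₀)
  a k := Function.update (R.a k) i₀ (c • R.a k i₀)
  b k := Function.update (R.b k) i₀ (c • R.b k i₀)
  y k := c⁻¹ • R.y k
  eq_sum := by
    simp only [MultilinearMap.map_update_smul, Function.update_eq_self, ← smul_sub,
      TensorProduct.smul_tmul, smul_inv_smul₀ hc]
    exact R.eq_sum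
  lePi φ := by
    simp only [φ.map_update_smul, Function.update_eq_self, ← smul_sub, norm_smul, mul_pow,
      ← Finset.mul_sum]
    exact mul_le_mul_of_nonneg_left (R.lePi φ) (by positivity)

lemma piSq_rescale (i₀ : Fin n) {c : 𝕜} (hc : c ≠ 0) (R : GammaRep 𝕜 u) :
    (R.rescale i₀ hc).piSq = ‖c‖ ^ 2 * R.piSq := by
  unfold piSq
  rw [Finset.mul_sum]
  exact Finset.sum_congr rfl fun k _ => by
    simp [rescale, ← smul_sub, map_smul_eq_mul, mul_pow]

lemma normSq_rescale (i₀ : Fin n) {c : 𝕜} (hc : c ≠ 0) (R : GammaRep 𝕜 u) :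
    (R.rescale i₀ hc).normSq = (‖c‖ ^ 2)⁻¹ * R.normSq := by
  unfold normSq
  rw [Finset.mul_sum]
  exact Finset.sum_congr rfl fun k _ => by simp [rescale, norm_smul, mul_pow]

lemma exists_balanced [NeZero n] (R : GammaRep 𝕜 u) {ε : ℝ} (hε : 0 < ε) :
    ∃ S : GammaRep 𝕜 u, S.piSq ≤ R.cost + ε ∧ S.normSq ≤ R.cost + ε := by
  obtain ⟨s, hs, hA, hB⟩ := exists_pos_mul_le_and_inv_mul_le R.piSq_nonneg R.normSq_nonneg hε
  have hc : ((√s : ℝ) : 𝕜) ≠ 0 := by exact_mod_cast (Real.sqrt_pos.mpr hs).ne'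
  have hnorm : ‖((√s : ℝ) : 𝕜)‖ ^ 2 = s := by
    rw [RCLike.norm_ofReal, abs_of_nonneg (Real.sqrt_nonneg s), Real.sq_sqrt hs.le]
  exact ⟨R.rescale 0 hc, by rwa [piSq_rescale, hnorm], by rwa [normSq_rescale, hnorm]⟩

instance nonempty [NeZero n] (u : (⨂[𝕜] i, X i) ⊗[𝕜] Y) : Nonempty (GammaRep 𝕜 u) := by
  induction u using TensorProduct.induction_on with
  | zero => exact ⟨zero⟩
  | tmul s y =>
    induction s using PiTensorProduct.induction_on with
    | smul_tprod c x =>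
      have h0 : (⨂ₜ[𝕜] i, (0 : ∀ i, X i) i) = 0 := (PiTensorProduct.tprod 𝕜).map_coord_zero 0 rfl
      have h : ((⨂ₜ[𝕜] i, x i) - ⨂ₜ[𝕜] i, (0 : ∀ i, X i) i) ⊗ₜ[𝕜] (c • y) =
          (c • ⨂ₜ[𝕜] i, x i) ⊗ₜ[𝕜] y := by
        rw [h0, sub_zero, TensorProduct.smul_tmul]
      exact h ▸ ⟨single (𝕜 := 𝕜) x 0 (c • y)⟩
    | add s t hs ht =>
      rw [TensorProduct.add_tmul]
      exact ⟨hs.some.append ht.some⟩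
  | add u v hu hv => exact ⟨hu.some.append hv.some⟩

lemma sum_norm_sq_le (R : GammaRep 𝕜 u) (φ : ContinuousMultilinearMap 𝕜 X 𝕜) :
    ∑ k, ‖φ (R.p k) - φ (R.q k)‖ ^ 2 ≤ ‖φ‖ ^ 2 * R.piSq := by
  refine (R.lePi φ).trans ?_
  rw [piSq, Finset.mul_sum]
  gcongr with k
  have h := norm_eval_le_projectiveSeminorm φ ((⨂ₜ[𝕜] j, R.a k j) - ⨂ₜ[𝕜] j, R.b k j)
  rw [map_sub, lift.tprod, lift.tprod] at h
  rw [← mul_pow]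
  gcongr
  exact h

lemma norm_contractPi_le (R : GammaRep 𝕜 u) (φ : ContinuousMultilinearMap 𝕜 X 𝕜) :
    ‖contractPi φ u‖ ≤ ‖φ‖ * R.cost := by
  have hsum : contractPi φ u = ∑ k, (φ (R.p k) - φ (R.q k)) • R.y k := by
    simp [R.eq_sum, contractPi_tmul]
  calc ‖contractPi φ u‖ ≤ ∑ k, ‖φ (R.p k) - φ (R.q k)‖ * ‖R.y k‖ := by
        rw [hsum]
        exact (norm_sum_le _ _).trans_eq (by simp only [norm_smul])
    _ ≤ √(∑ k, ‖φ (R.p k) - φ (R.q k)‖ ^ 2) * √R.normSq := Real.sum_mul_le_sqrt_mul_sqrt _ _ _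
    _ ≤ √(‖φ‖ ^ 2 * R.piSq) * √R.normSq := by gcongr; exact R.sum_norm_sq_le φ
    _ = ‖φ‖ * R.cost := by
        rw [Real.sqrt_mul (sq_nonneg _), Real.sqrt_sq (norm_nonneg _), cost, mul_assoc]

end GammaRep

open GammaRep

variable {u : (⨂[𝕜] i, X i) ⊗[𝕜] Y}

lemma gammaTensor_eq_iInf (u : (⨂[𝕜] i, X i) ⊗[𝕜] Y) :
    gammaTensor 𝕜 u = ⨅ R : GammaRep 𝕜 u, R.cost := by
  refine congrArg sInf (Set.ext fun r => ⟨?_, ?_⟩)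
  · rintro ⟨m, p, q, a, b, y, hu, hle, rfl⟩
    exact ⟨⟨m, p, q, a, b, y, hu, hle⟩, rfl⟩
  · rintro ⟨R, rfl⟩
    exact ⟨R.m, R.p, R.q, R.a, R.b, R.y, R.eq_sum, R.lePi, rfl⟩

lemma gammaTensor_le_cost (R : GammaRep 𝕜 u) : gammaTensor 𝕜 u ≤ R.cost := by
  rw [gammaTensor_eq_iInf]
  exact ciInf_le ⟨0, by rintro _ ⟨S, rfl⟩; exact S.cost_nonneg⟩ R

lemma gammaTensor_nonneg (u : (⨂[𝕜] i, X i) ⊗[𝕜] Y) : 0 ≤ gammaTensor 𝕜 u := by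
  rw [gammaTensor_eq_iInf]
  exact Real.iInf_nonneg fun R => R.cost_nonneg

lemma mul_gammaTensor_eq_iInf {r : ℝ} (hr : 0 ≤ r) (u : (⨂[𝕜] i, X i) ⊗[𝕜] Y) :
    r * gammaTensor 𝕜 u = ⨅ R : GammaRep 𝕜 u, r * R.cost := by
  rw [gammaTensor_eq_iInf, Real.mul_iInf_of_nonneg hr]

lemma gammaTensor_zero : gammaTensor 𝕜 (0 : (⨂[𝕜] i, X i) ⊗[𝕜] Y) = 0 :=
  le_antisymm ((gammaTensor_le_cost zero).trans_eq cost_zero) (gammaTensor_nonneg 0)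

lemma gammaTensor_tmul_le (x z : ∀ i, X i) (y : Y) :
    gammaTensor 𝕜 (((⨂ₜ[𝕜] i, x i) - ⨂ₜ[𝕜] i, z i) ⊗ₜ[𝕜] y) ≤
      projectiveSeminorm ((⨂ₜ[𝕜] i, x i) - ⨂ₜ[𝕜] i, z i) * ‖y‖ :=
  (gammaTensor_le_cost (single x z y)).trans_eq (cost_single x z y)

lemma gammaTensor_smul_le [NeZero n] (c : 𝕜) (u : (⨂[𝕜] i, X i) ⊗[𝕜] Y) :
    gammaTensor 𝕜 (c • u) ≤ ‖c‖ * gammaTensor 𝕜 u := by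
  rw [mul_gammaTensor_eq_iInf (norm_nonneg c)]
  exact le_ciInf fun R => (gammaTensor_le_cost (R.smul c)).trans_eq (R.cost_smul c)

lemma gammaTensor_add_le [NeZero n] (u v : (⨂[𝕜] i, X i) ⊗[𝕜] Y) :
    gammaTensor 𝕜 (u + v) ≤ gammaTensor 𝕜 u + gammaTensor 𝕜 v := by
  refine le_of_forall_pos_le_add fun ε hε => ?_
  have hε4 : 0 < ε / 4 := by positivity
  obtain ⟨R, hR⟩ : ∃ R : GammaRep 𝕜 u, R.cost < gammaTensor 𝕜 u + ε / 4 :=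
    exists_lt_of_ciInf_lt (by rw [← gammaTensor_eq_iInf]; linarith)
  obtain ⟨S, hS⟩ : ∃ S : GammaRep 𝕜 v, S.cost < gammaTensor 𝕜 v + ε / 4 :=
    exists_lt_of_ciInf_lt (by rw [← gammaTensor_eq_iInf]; linarith)
  obtain ⟨R', hR'π, hR'y⟩ := R.exists_balanced hε4
  obtain ⟨S', hS'π, hS'y⟩ := S.exists_balanced hε4
  have hγ := add_nonneg (gammaTensor_nonneg (𝕜 := 𝕜) u) (gammaTensor_nonneg (𝕜 := 𝕜) v)
  calc gammaTensor 𝕜 (u + v) ≤ (R'.append S').cost := gammaTensor_le_cost _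
    _ = √(R'.piSq + S'.piSq) * √(R'.normSq + S'.normSq) := by
        rw [cost, piSq_append, normSq_append]
    _ ≤ √(gammaTensor 𝕜 u + gammaTensor 𝕜 v + ε) * √(gammaTensor 𝕜 u + gammaTensor 𝕜 v + ε) := by
        gcongr √?_ * √?_ <;> linarith
    _ = gammaTensor 𝕜 u + gammaTensor 𝕜 v + ε := Real.mul_self_sqrt (by linarith)

variable (𝕜 X Y) in
def gammaSeminorm [NeZero n] : Seminorm 𝕜 ((⨂[𝕜] i, X i) ⊗[𝕜] Y) :=
  Seminorm.ofSMulLE (gammaTensor 𝕜) gammaTensor_zero gammaTensor_add_le gammaTensor_smul_le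

lemma gammaTensor_smul [NeZero n] (c : 𝕜) (u : (⨂[𝕜] i, X i) ⊗[𝕜] Y) :
    gammaTensor 𝕜 (c • u) = ‖c‖ * gammaTensor 𝕜 u :=
  map_smul_eq_mul (gammaSeminorm 𝕜 X Y) c u

lemma norm_contractPi_le_gammaTensor [NeZero n] (φ : ContinuousMultilinearMap 𝕜 X 𝕜)
    (u : (⨂[𝕜] i, X i) ⊗[𝕜] Y) : ‖contractPi φ u‖ ≤ ‖φ‖ * gammaTensor 𝕜 u := by
  rw [mul_gammaTensor_eq_iInf (norm_nonneg φ)]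
  exact le_ciInf fun R => R.norm_contractPi_le φ

lemma eq_zero_of_gammaTensor_eq_zero [NeZero n] (h : gammaTensor 𝕜 u = 0) : u = 0 :=
  eq_zero_of_forall_contractPi_eq_zero u fun φ =>
    norm_le_zero_iff.mp (by simpa [h] using norm_contractPi_le_gammaTensor φ u)

end Gamma

theorem gammaTensor_isNorm_general {n : ℕ} (hn : 0 < n) {X : Fin n → Type u} {Y : Type u}
    [∀ i, NormedAddCommGroup (X i)] [∀ i, NormedSpace 𝕜 (X i)]
    [NormedAddCommGroup Y] [NormedSpace 𝕜 Y] :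
    (∀ u v : (⨂[𝕜] i, X i) ⊗[𝕜] Y,
      gammaTensor 𝕜 (u + v) ≤ gammaTensor 𝕜 u + gammaTensor 𝕜 v) ∧
    (∀ (c : 𝕜) (u : (⨂[𝕜] i, X i) ⊗[𝕜] Y),
      gammaTensor 𝕜 (c • u) = ‖c‖ * gammaTensor 𝕜 u) ∧
    (∀ u : (⨂[𝕜] i, X i) ⊗[𝕜] Y, gammaTensor 𝕜 u = 0 ↔ u = 0) ∧
    (∀ (x z : ∀ i, X i) (y : Y),
      gammaTensor 𝕜 (((⨂ₜ[𝕜] i, x i) - ⨂ₜ[𝕜] i, z i) ⊗ₜ[𝕜] y) ≤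
        projectiveSeminorm ((⨂ₜ[𝕜] i, x i) - ⨂ₜ[𝕜] i, z i) * ‖y‖) := by
  have : NeZero n := ⟨hn.ne'⟩
  exact ⟨gammaTensor_add_le, gammaTensor_smul,
    fun u => ⟨eq_zero_of_gammaTensor_eq_zero, fun h => h ▸ gammaTensor_zero⟩, gammaTensor_tmul_le⟩

/-- For Banach spaces `X₁,…,Xₙ, Y`, the function `γ` is a norm on
`X₁ ⊗ ⋯ ⊗ Xₙ ⊗ Y`, and `γ((p − q) ⊗ y) ≤ π(p − q) ‖y‖` for all decomposable tensors
`p, q ∈ Σ_{X₁,…,Xₙ}` and all `y ∈ Y`. -/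
theorem gammaTensor_isNorm {n : ℕ} (hn : 0 < n) {X : Fin n → Type u} {Y : Type u}
    [∀ i, NormedAddCommGroup (X i)] [∀ i, NormedSpace 𝕜 (X i)] [∀ i, CompleteSpace (X i)]
    [NormedAddCommGroup Y] [NormedSpace 𝕜 Y] [CompleteSpace Y] :
    (∀ u v : (⨂[𝕜] i, X i) ⊗[𝕜] Y,
      gammaTensor 𝕜 (u + v) ≤ gammaTensor 𝕜 u + gammaTensor 𝕜 v) ∧
    (∀ (c : 𝕜) (u : (⨂[𝕜] i, X i) ⊗[𝕜] Y),
      gammaTensor 𝕜 (c • u) = ‖c‖ * gammaTensor 𝕜 u) ∧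
    (∀ u : (⨂[𝕜] i, X i) ⊗[𝕜] Y, gammaTensor 𝕜 u = 0 ↔ u = 0) ∧
    (∀ (x z : ∀ i, X i) (y : Y),
      gammaTensor 𝕜 (((⨂ₜ[𝕜] i, x i) - ⨂ₜ[𝕜] i, z i) ⊗ₜ[𝕜] y) ≤
        projectiveSeminorm ((⨂ₜ[𝕜] i, x i) - ⨂ₜ[𝕜] i, z i) * ‖y‖) :=
  gammaTensor_isNorm_general hn
end
end

section
/- Let X₁,…,Xₙ, Y be Banach spaces, φ a bounded multilinear functional on X₁ × ⋯ × Xₙ, and y* ∈ Y*. Then the linear functional φ ⊗ y* on (X₁ ⊗ ⋯ ⊗ Xₙ ⊗ Y, γ), defined on elementary tensors by (φ ⊗ y*)(x¹ ⊗ ⋯ ⊗ xⁿ ⊗ y) = φ(x¹,…,xⁿ) · y*(y), is bounded with norm at most ‖φ‖ · ‖y*‖. -/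
open scoped NNReal

noncomputable section

universe u

variable (𝕜 : Type u) [RCLike 𝕜]

variable {𝕜}

open scoped TensorProduct
open PiTensorProduct

variable (𝕜)

variable {𝕜}

/-! The functional is bounded on each admissible representation `∑ᵢ (⨂ pᵢ − ⨂ qᵢ) ⊗ yᵢ`:
Cauchy–Schwarz splits `∑ᵢ (φ pᵢ − φ qᵢ) ψ yᵢ` into an `ℓ²`-sum over the `φ`-values and one over
the `yᵢ`; the relation `≤_π` trades the first for the `ℓ²`-sum of `φ(aᵢ − bᵢ)`, which `‖φ‖` and
the projective norm control. Taking the infimum over representations, whose set is nonempty as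
soon as `n > 0` because `c • ⨂ f = ⨂ (update f 0 (c • f 0)) − ⨂ 0`, gives the bound by `γ`. -/

theorem Real.sqrt_sum_sq_le_mul_sqrt_sum_sq {ι : Type*} (s : Finset ι) {f g : ι → ℝ} {c : ℝ}
    (hc : 0 ≤ c) (hf : ∀ i ∈ s, 0 ≤ f i) (hfg : ∀ i ∈ s, f i ≤ c * g i) :
    √(∑ i ∈ s, f i ^ 2) ≤ c * √(∑ i ∈ s, g i ^ 2) :=
  calc √(∑ i ∈ s, f i ^ 2)
      ≤ √(∑ i ∈ s, (c * g i) ^ 2) :=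
        Real.sqrt_le_sqrt <| Finset.sum_le_sum fun i hi => pow_le_pow_left₀ (hf i hi) (hfg i hi) 2
    _ = c * √(∑ i ∈ s, g i ^ 2) := by
        simp_rw [mul_pow, ← Finset.mul_sum]
        rw [Real.sqrt_mul (sq_nonneg c), Real.sqrt_sq hc]

section TensorFunctional

variable {n : ℕ} {X : Fin n → Type u} {Y : Type u}
  [∀ i, NormedAddCommGroup (X i)] [∀ i, NormedSpace 𝕜 (X i)]
  [NormedAddCommGroup Y] [NormedSpace 𝕜 Y]

theorem norm_sub_le_projectiveSeminorm_tprod_sub (φ : ContinuousMultilinearMap 𝕜 X 𝕜)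
    (a b : ∀ i, X i) :
    ‖φ a - φ b‖ ≤ ‖φ‖ * projectiveSeminorm ((⨂ₜ[𝕜] j, a j) - ⨂ₜ[𝕜] j, b j) := by
  have h := norm_eval_le_projectiveSeminorm φ ((⨂ₜ[𝕜] j, a j) - ⨂ₜ[𝕜] j, b j)
  rwa [map_sub, lift.tprod, lift.tprod] at h

/-- `φ ⊗ ψ`, as a linear functional on the algebraic tensor product. -/
abbrev tensorFunctional (φ : ContinuousMultilinearMap 𝕜 X 𝕜) (ψ : Y →L[𝕜] 𝕜) :
    (⨂[𝕜] i, X i) ⊗[𝕜] Y →ₗ[𝕜] 𝕜 :=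
  TensorProduct.lift ((PiTensorProduct.lift φ.toMultilinearMap).smulRight (ψ : Y →ₗ[𝕜] 𝕜))

variable (φ : ContinuousMultilinearMap 𝕜 X 𝕜) (ψ : Y →L[𝕜] 𝕜)

theorem tensorFunctional_tmul (t : ⨂[𝕜] i, X i) (y : Y) :
    tensorFunctional φ ψ (t ⊗ₜ[𝕜] y) = PiTensorProduct.lift φ.toMultilinearMap t * ψ y := by
  simp [mul_comm]

theorem tensorFunctional_tprod_tmul (x : ∀ i, X i) (y : Y) :
    tensorFunctional φ ψ ((⨂ₜ[𝕜] i, x i) ⊗ₜ[𝕜] y) = φ x * ψ y := by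
  rw [tensorFunctional_tmul, lift.tprod, ContinuousMultilinearMap.coe_coe]

theorem tensorFunctional_sum_sub_tmul {m : ℕ} (p q : Fin m → ∀ i, X i) (y : Fin m → Y) :
    tensorFunctional φ ψ (∑ i, ((⨂ₜ[𝕜] j, p i j) - ⨂ₜ[𝕜] j, q i j) ⊗ₜ[𝕜] y i) =
      ∑ i, (φ (p i) - φ (q i)) * ψ (y i) := by
  simp only [map_sum, tensorFunctional_tmul, map_sub, lift.tprod, ContinuousMultilinearMap.coe_coe]

theorem norm_tensorFunctional_sum_sub_tmul_le {m : ℕ} {p q a b : Fin m → ∀ i, X i}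
    (hle : LePi 𝕜 p q a b) (y : Fin m → Y) :
    ‖tensorFunctional φ ψ (∑ i, ((⨂ₜ[𝕜] j, p i j) - ⨂ₜ[𝕜] j, q i j) ⊗ₜ[𝕜] y i)‖ ≤
      ‖φ‖ * ‖ψ‖ *
        (√(∑ i, projectiveSeminorm ((⨂ₜ[𝕜] j, a i j) - ⨂ₜ[𝕜] j, b i j) ^ 2) *
          √(∑ i, ‖y i‖ ^ 2)) := by
  have hφ : √(∑ i, ‖φ (a i) - φ (b i)‖ ^ 2) ≤
      ‖φ‖ * √(∑ i, projectiveSeminorm ((⨂ₜ[𝕜] j, a i j) - ⨂ₜ[𝕜] j, b i j) ^ 2) :=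
    Real.sqrt_sum_sq_le_mul_sqrt_sum_sq _ (norm_nonneg φ) (fun _ _ => norm_nonneg _)
      fun i _ => norm_sub_le_projectiveSeminorm_tprod_sub φ (a i) (b i)
  have hψ : √(∑ i, ‖ψ (y i)‖ ^ 2) ≤ ‖ψ‖ * √(∑ i, ‖y i‖ ^ 2) :=
    Real.sqrt_sum_sq_le_mul_sqrt_sum_sq _ (norm_nonneg ψ) (fun _ _ => norm_nonneg _)
      fun i _ => ψ.le_opNorm (y i)
  rw [tensorFunctional_sum_sub_tmul]
  calc ‖∑ i, (φ (p i) - φ (q i)) * ψ (y i)‖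
      ≤ ∑ i, ‖φ (p i) - φ (q i)‖ * ‖ψ (y i)‖ :=
        (norm_sum_le _ _).trans_eq (by simp only [norm_mul])
    _ ≤ √(∑ i, ‖φ (p i) - φ (q i)‖ ^ 2) * √(∑ i, ‖ψ (y i)‖ ^ 2) :=
        Real.sum_mul_le_sqrt_mul_sqrt _ _ _
    _ ≤ √(∑ i, ‖φ (a i) - φ (b i)‖ ^ 2) * √(∑ i, ‖ψ (y i)‖ ^ 2) :=
        mul_le_mul_of_nonneg_right (Real.sqrt_le_sqrt (hle φ)) (Real.sqrt_nonneg _)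
    _ ≤ (‖φ‖ * √(∑ i, projectiveSeminorm ((⨂ₜ[𝕜] j, a i j) - ⨂ₜ[𝕜] j, b i j) ^ 2)) *
          (‖ψ‖ * √(∑ i, ‖y i‖ ^ 2)) := by
        gcongr
    _ = _ := by ring

variable (𝕜 X Y) in
/-- The tensors `∑ᵢ (⨂ pᵢ − ⨂ qᵢ) ⊗ yᵢ` over which the infimum defining `gammaTensor` runs. -/
def sumSubTmul : AddSubmonoid ((⨂[𝕜] i, X i) ⊗[𝕜] Y) where
  carrier := {u | ∃ (m : ℕ) (p q : Fin m → ∀ i, X i) (y : Fin m → Y),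
    u = ∑ i, ((⨂ₜ[𝕜] j, p i j) - ⨂ₜ[𝕜] j, q i j) ⊗ₜ[𝕜] y i}
  zero_mem' := ⟨0, 0, 0, 0, by simp⟩
  add_mem' := by
    rintro _ _ ⟨m, p, q, y, rfl⟩ ⟨m', p', q', y', rfl⟩
    refine ⟨m + m', Fin.append p p', Fin.append q q', Fin.append y y', ?_⟩
    simp [Fin.sum_univ_add]

theorem smul_tprod_eq_tprod_sub_tprod (hn : 0 < n) (c : 𝕜) (f : ∀ i, X i) :
    c • (⨂ₜ[𝕜] j, f j) = (⨂ₜ[𝕜] j, Function.update f ⟨0, hn⟩ (c • f ⟨0, hn⟩) j) -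
      ⨂ₜ[𝕜] j, (0 : ∀ i, X i) j := by
  have h := (PiTensorProduct.tprod 𝕜).map_update_smul f ⟨0, hn⟩ c (f ⟨0, hn⟩)
  rw [Function.update_eq_self] at h
  rw [h, (PiTensorProduct.tprod 𝕜).map_coord_zero (m := 0) ⟨0, hn⟩ rfl, sub_zero]

theorem sumSubTmul_eq_top (hn : 0 < n) : sumSubTmul 𝕜 X Y = ⊤ := by
  refine (AddSubmonoid.eq_top_iff' _).2 fun u => ?_
  induction u using TensorProduct.induction_on with
  | zero => exact zero_mem _
  | add u v hu hv => exact add_mem hu hv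
  | tmul t y =>
    induction t using PiTensorProduct.induction_on with
    | smul_tprod c f =>
      refine ⟨1, fun _ => Function.update f ⟨0, hn⟩ (c • f ⟨0, hn⟩), fun _ => 0, fun _ => y, ?_⟩
      rw [Fin.sum_univ_one, smul_tprod_eq_tprod_sub_tprod hn]
    | add t₁ t₂ h₁ h₂ => rw [TensorProduct.add_tmul]; exact add_mem h₁ h₂

theorem norm_tensorFunctional_le_gammaTensor (hn : 0 < n) (u : (⨂[𝕜] i, X i) ⊗[𝕜] Y) :
    ‖tensorFunctional φ ψ u‖ ≤ ‖φ‖ * ‖ψ‖ * gammaTensor 𝕜 u := by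
  obtain ⟨m, p, q, y, hu⟩ : u ∈ sumSubTmul 𝕜 X Y := by
    simp only [sumSubTmul_eq_top hn, AddSubmonoid.mem_top]
  rw [gammaTensor, ← smul_eq_mul, ← Real.sInf_smul_of_nonneg (by positivity)]
  refine le_csInf (Set.Nonempty.smul_set ⟨_, m, p, q, p, q, y, hu, fun _ => le_rfl, rfl⟩) ?_
  rintro _ ⟨_, ⟨m, p, q, a, b, y, rfl, hle, rfl⟩, rfl⟩
  exact norm_tensorFunctional_sum_sub_tmul_le φ ψ hle y

end TensorFunctional

theorem tensor_functional_gammaBounded_general {n : ℕ} (hn : 0 < n) {X : Fin n → Type u} {Y : Type u}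
    [∀ i, NormedAddCommGroup (X i)] [∀ i, NormedSpace 𝕜 (X i)]
    [NormedAddCommGroup Y] [NormedSpace 𝕜 Y]
    (φ : ContinuousMultilinearMap 𝕜 X 𝕜) (ψ : Y →L[𝕜] 𝕜) :
    (∀ (x : ∀ i, X i) (y : Y),
      TensorProduct.lift ((PiTensorProduct.lift φ.toMultilinearMap).smulRight
          (ψ : Y →ₗ[𝕜] 𝕜)) ((⨂ₜ[𝕜] i, x i) ⊗ₜ[𝕜] y) = φ x * ψ y) ∧
    (∀ u : (⨂[𝕜] i, X i) ⊗[𝕜] Y,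
      ‖TensorProduct.lift ((PiTensorProduct.lift φ.toMultilinearMap).smulRight
          (ψ : Y →ₗ[𝕜] 𝕜)) u‖ ≤ ‖φ‖ * ‖ψ‖ * gammaTensor 𝕜 u) :=
  ⟨tensorFunctional_tprod_tmul φ ψ, norm_tensorFunctional_le_gammaTensor φ ψ hn⟩

/-- For Banach spaces `X₁,…,Xₙ, Y`, a bounded multilinear functional `φ`
on `X₁ × ⋯ × Xₙ` and `y* ∈ Y*`, the linear functional `φ ⊗ y*` on `(X₁ ⊗ ⋯ ⊗ Xₙ ⊗ Y, γ)`,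
given on elementary tensors by `(φ ⊗ y*)(x¹ ⊗ ⋯ ⊗ xⁿ ⊗ y) = φ(x¹,…,xⁿ) y*(y)`, is bounded
with norm at most `‖φ‖ ‖y*‖`. -/
theorem tensor_functional_gammaBounded {n : ℕ} (hn : 0 < n) {X : Fin n → Type u} {Y : Type u}
    [∀ i, NormedAddCommGroup (X i)] [∀ i, NormedSpace 𝕜 (X i)] [∀ i, CompleteSpace (X i)]
    [NormedAddCommGroup Y] [NormedSpace 𝕜 Y] [CompleteSpace Y]
    (φ : ContinuousMultilinearMap 𝕜 X 𝕜) (ψ : Y →L[𝕜] 𝕜) :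
    (∀ (x : ∀ i, X i) (y : Y),
      TensorProduct.lift ((PiTensorProduct.lift φ.toMultilinearMap).smulRight
          (ψ : Y →ₗ[𝕜] 𝕜)) ((⨂ₜ[𝕜] i, x i) ⊗ₜ[𝕜] y) = φ x * ψ y) ∧
    (∀ u : (⨂[𝕜] i, X i) ⊗[𝕜] Y,
      ‖TensorProduct.lift ((PiTensorProduct.lift φ.toMultilinearMap).smulRight
          (ψ : Y →ₗ[𝕜] 𝕜)) u‖ ≤ ‖φ‖ * ‖ψ‖ * gammaTensor 𝕜 u) :=
  tensor_functional_gammaBounded_general hn φ ψ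
end
end
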